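/- Refined Etemadi bound (classical): with X_1,…,X_n independent and S_k the partial sums, for every t > 0, P(max_{1≤k≤n} |S_k| ≥ 3t) ≤ P(|S_n| ≥ t) + max_{1≤k≤n} P(|S_n − S_k| ≥ 2t), and consequently P(max_{1≤k≤n} |S_k| ≥ 3t) ≤ 2 P(|S_n| ≥ t) + max_{1≤k≤n} P(|S_k| ≥ t). -/

import Mathlib

/-!
Let `τ` be the first index with `‖S_τ‖ ≥ 3t`. On `{τ = k}`, either `‖S_n‖ ≥ t` or
`‖S_n - S_k‖ ≥ 2t`. The event `{τ = k}` depends only on `X_i, i ≤ k`, and `S_n - S_k` only on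
`X_i, i > k`, so `P(τ = k, ‖S_n - S_k‖ ≥ 2t) = P(τ = k) P(‖S_n - S_k‖ ≥ 2t)`; summing over the
disjoint events `{τ = k}` bounds this part by `max_k P(‖S_n - S_k‖ ≥ 2t)`. The second bound
follows from `‖S_n - S_k‖ ≥ 2t → ‖S_n‖ ≥ t ∨ ‖S_k‖ ≥ t`.
-/

open MeasureTheory ProbabilityTheory Finset Function

theorem measure_iUnion_inter_le_iSup {Ω ι : Type*} {mΩ : MeasurableSpace Ω} {μ : Measure Ω}
    [IsZeroOrProbabilityMeasure μ] [Countable ι]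
    {A B : ι → Set Ω} (hdisj : Pairwise (Disjoint on A)) (hA : ∀ k, MeasurableSet (A k))
    (hindep : ∀ k, μ (A k ∩ B k) = μ (A k) * μ (B k)) :
    μ (⋃ k, A k ∩ B k) ≤ ⨆ k, μ (B k) :=
  calc μ (⋃ k, A k ∩ B k) ≤ ∑' k, μ (A k) * μ (B k) := by
        simpa only [hindep] using measure_iUnion_le (μ := μ) fun k => A k ∩ B k
    _ ≤ ∑' k, μ (A k) * ⨆ j, μ (B j) :=
        ENNReal.tsum_le_tsum fun k => by gcongr; exact le_iSup (fun j => μ (B j)) k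
    _ = μ (⋃ k, A k) * ⨆ j, μ (B j) := by rw [ENNReal.tsum_mul_right, measure_iUnion hdisj hA]
    _ ≤ ⨆ j, μ (B j) := mul_le_of_le_one_left zero_le prob_le_one

theorem MeasurableSet.disjointed_of_le {Ω ι : Type*} {m : MeasurableSpace Ω} [Preorder ι]
    [LocallyFiniteOrderBot ι] {f : ι → Set Ω} {k : ι} (hf : ∀ j ≤ k, MeasurableSet (f j)) :
    MeasurableSet (disjointed f k) := by
  rw [disjointed_apply, sup_set_eq_biUnion]
  exact (hf k le_rfl).diff <| Finset.measurableSet_biUnion _ fun j hj =>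
    hf j (Finset.mem_Iio.mp hj).le

theorem ProbabilityTheory.iIndepFun.measure_inter_eq_mul_of_le_of_lt {Ω ι : Type*}
    {mΩ : MeasurableSpace Ω} {μ : Measure Ω} [LinearOrder ι] {β : ι → Type*}
    {mβ : ∀ i, MeasurableSpace (β i)}
    {X : ∀ i, Ω → β i} (hX : iIndepFun X μ) (hmeas : ∀ i, Measurable (X i)) (k : ι)
    {A B : Set Ω} (hA : MeasurableSet[⨆ i ≤ k, (mβ i).comap (X i)] A)
    (hB : MeasurableSet[⨆ i > k, (mβ i).comap (X i)] B) :
    μ (A ∩ B) = μ A * μ B := by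
  have hpf :
      Indep (⨆ i ∈ Set.Iic k, (mβ i).comap (X i)) (⨆ i ∈ Set.Ioi k, (mβ i).comap (X i)) μ :=
    indep_iSup_of_disjoint (fun i => (hmeas i).comap_le) ((iIndepFun_iff_iIndep _ _ _).mp hX)
      (Set.Iic_disjoint_Ioi le_rfl)
  exact (Indep_iff _ _ μ).mp hpf A B hA hB

section PartialSums

variable {Ω ι E : Type*} [NormedAddCommGroup E]

theorem setOf_le_norm_sub_subset (f g : Ω → E) (b c : ℝ) :
    {ω | b + c ≤ ‖f ω - g ω‖} ⊆ {ω | b ≤ ‖f ω‖} ∪ {ω | c ≤ ‖g ω‖} := by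
  intro ω hω
  by_contra hmem
  simp only [Set.mem_union, Set.mem_ofPred_eq, not_or, not_le] at hω hmem
  linarith [norm_sub_le (f ω) (g ω)]

/-- `disjointed` cuts out the event that `k` is the first index with `a + b ≤ ‖S k‖`. -/
theorem setOf_exists_le_norm_subset [PartialOrder ι] [LocallyFiniteOrderBot ι]
    (S : ι → Ω → E) (T : Ω → E) (a b : ℝ) :
    {ω | ∃ k, a + b ≤ ‖S k ω‖} ⊆ {ω | a ≤ ‖T ω‖} ∪
      ⋃ k, disjointed (fun k => {ω | a + b ≤ ‖S k ω‖}) k ∩ {ω | b ≤ ‖T ω - S k ω‖} := by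
  intro ω ⟨k, hk⟩
  by_cases hT : a ≤ ‖T ω‖
  · exact Or.inl hT
  have : ω ∈ ⋃ k, disjointed (fun k => {ω | a + b ≤ ‖S k ω‖}) k := by
    rw [iUnion_disjointed]
    exact Set.mem_iUnion.mpr ⟨k, hk⟩
  obtain ⟨j, hj⟩ := Set.mem_iUnion.mp this
  have hSj : a + b ≤ ‖S j ω‖ := disjointed_subset _ j hj
  refine Or.inr (Set.mem_iUnion.mpr ⟨j, hj, ?_⟩)
  show b ≤ ‖T ω - S j ω‖
  linarith [norm_sub_norm_le (S j ω) (T ω), norm_sub_rev (S j ω) (T ω), not_le.mp hT]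

theorem iSup_measure_le_norm_sub_le {mΩ : MeasurableSpace Ω} (μ : Measure Ω) (T : Ω → E)
    (S : ι → Ω → E) (b c : ℝ) :
    ⨆ k, μ {ω | b + c ≤ ‖T ω - S k ω‖} ≤ μ {ω | b ≤ ‖T ω‖} + ⨆ k, μ {ω | c ≤ ‖S k ω‖} :=
  iSup_le fun k => (measure_mono (setOf_le_norm_sub_subset _ _ b c)).trans <|
    (measure_union_le _ _).trans <| by gcongr; exact le_iSup (fun k => μ {ω | c ≤ ‖S k ω‖}) k

variable [Fintype ι] [LinearOrder ι]

def partialSum (X : ι → Ω → E) (k : ι) (ω : Ω) : E := ∑ i ∈ univ.filter (· ≤ k), X i ω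

theorem sum_sub_partialSum (X : ι → Ω → E) (k : ι) (ω : Ω) :
    ∑ i, X i ω - partialSum X k ω = ∑ i ∈ univ.filter (k < ·), X i ω := by
  rw [partialSum, ← sum_filter_add_sum_filter_not univ (· ≤ k)]
  simp only [not_le, add_sub_cancel_left]

variable [MeasurableSpace E] [BorelSpace E] [SecondCountableTopology E]
  {mΩ : MeasurableSpace Ω} {μ : Measure Ω}

theorem measure_exists_le_norm_partialSum_le {X : ι → Ω → E} [LocallyFiniteOrderBot ι]
    (hmeas : ∀ i, Measurable (X i)) (hX : iIndepFun X μ) (a b : ℝ) :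
    μ {ω | ∃ k, a + b ≤ ‖partialSum X k ω‖} ≤ μ {ω | a ≤ ‖∑ i, X i ω‖}
      + ⨆ k, μ {ω | b ≤ ‖∑ i, X i ω - partialSum X k ω‖} := by
  have := hX.isProbabilityMeasure
  set A := disjointed fun k => {ω | a + b ≤ ‖partialSum X k ω‖}
  set B := fun k => {ω | b ≤ ‖∑ i, X i ω - partialSum X k ω‖}
  have measurableSet_le_norm_sum {m : MeasurableSpace Ω} {s : Finset ι} (c : ℝ)
      (hm : ∀ i ∈ s, MeasurableSpace.comap (X i) inferInstance ≤ m) :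
      MeasurableSet[m] {ω | c ≤ ‖∑ i ∈ s, X i ω‖} :=
    measurable_norm.comp (Finset.measurable_sum _ fun i hi =>
      (comap_measurable (X i)).mono (hm i hi) le_rfl) measurableSet_Ici
  have hA_past (k : ι) :
      MeasurableSet[⨆ i ≤ k, MeasurableSpace.comap (X i) inferInstance] (A k) :=
    MeasurableSet.disjointed_of_le fun j hj =>
      measurableSet_le_norm_sum _ fun i hi => le_iSup₂_of_le (f := fun i (_ : i ≤ k) => _) i
        ((mem_filter.mp hi).2.trans hj) le_rfl
  have hB_future (k : ι) :
      MeasurableSet[⨆ i > k, MeasurableSpace.comap (X i) inferInstance] (B k) := by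
    simp only [B, sum_sub_partialSum]
    exact measurableSet_le_norm_sum _ fun i hi => le_iSup₂_of_le (f := fun i (_ : i > k) => _) i
      (mem_filter.mp hi).2 le_rfl
  calc _ ≤ μ ({ω | a ≤ ‖∑ i, X i ω‖} ∪ ⋃ k, A k ∩ B k) :=
        measure_mono (setOf_exists_le_norm_subset _ _ a b)
    _ ≤ _ := (measure_union_le _ _).trans <| by
        gcongr
        refine measure_iUnion_inter_le_iSup (disjoint_disjointed _)
          (fun k => iSup₂_le (fun i _ => (hmeas i).comap_le) _ (hA_past k)) fun k => ?_
        exact hX.measure_inter_eq_mul_of_le_of_lt hmeas k (hA_past k) (hB_future k)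

end PartialSums

theorem refined_etemadi_bound_general {Ω : Type*} [MeasurableSpace Ω]
    (μ : Measure Ω)
    (n : ℕ) (X : Fin n → Ω → ℝ)
    (hmeas : ∀ k, Measurable (X k))
    (hindep : iIndepFun X μ)
    (t : ℝ) :
    (μ {ω | ∃ k : Fin n,
        3 * t ≤ |∑ i ∈ Finset.univ.filter (· ≤ k), X i ω|}
      ≤ μ {ω | t ≤ |∑ i, X i ω|}
        + ⨆ k : Fin n, μ {ω | 2 * t ≤
            |∑ i, X i ω - ∑ i ∈ Finset.univ.filter (· ≤ k), X i ω|}) ∧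
    (μ {ω | ∃ k : Fin n,
        3 * t ≤ |∑ i ∈ Finset.univ.filter (· ≤ k), X i ω|}
      ≤ 2 * μ {ω | t ≤ |∑ i, X i ω|}
        + ⨆ k : Fin n, μ {ω | t ≤
            |∑ i ∈ Finset.univ.filter (· ≤ k), X i ω|}) := by
  have first := measure_exists_le_norm_partialSum_le hmeas hindep t (2 * t)
  rw [show t + 2 * t = 3 * t by ring] at first
  have second := iSup_measure_le_norm_sub_le μ (fun ω => ∑ i, X i ω) (partialSum X) t t
  rw [← two_mul] at second
  simp only [partialSum, Real.norm_eq_abs] at first second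
  refine ⟨first, first.trans ?_⟩
  rw [two_mul (μ _), add_assoc]
  exact add_le_add_right second _

/-- Refined Etemadi bound: for independent real random variables `X 1, …, X n`
with partial sums `S k = Σ_{i ≤ k} X i` and `S n = Σ_i X i`, for every `t > 0`,
`P(max_k |S_k| ≥ 3t) ≤ P(|S_n| ≥ t) + max_k P(|S_n − S_k| ≥ 2t)`, and
consequently `P(max_k |S_k| ≥ 3t) ≤ 2 P(|S_n| ≥ t) + max_k P(|S_k| ≥ t)`. -/
theorem refined_etemadi_bound {Ω : Type*} [MeasurableSpace Ω]
    (μ : Measure Ω) [IsProbabilityMeasure μ]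
    (n : ℕ) (X : Fin n → Ω → ℝ)
    (hmeas : ∀ k, Measurable (X k))
    (hindep : iIndepFun X μ)
    (t : ℝ) (ht : 0 < t) :
    (μ {ω | ∃ k : Fin n,
        3 * t ≤ |∑ i ∈ Finset.univ.filter (· ≤ k), X i ω|}
      ≤ μ {ω | t ≤ |∑ i, X i ω|}
        + ⨆ k : Fin n, μ {ω | 2 * t ≤
            |∑ i, X i ω - ∑ i ∈ Finset.univ.filter (· ≤ k), X i ω|}) ∧
    (μ {ω | ∃ k : Fin n,
        3 * t ≤ |∑ i ∈ Finset.univ.filter (· ≤ k), X i ω|}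
      ≤ 2 * μ {ω | t ≤ |∑ i, X i ω|}
        + ⨆ k : Fin n, μ {ω | t ≤
            |∑ i ∈ Finset.univ.filter (· ≤ k), X i ω|}) :=
  refined_etemadi_bound_general μ n X hmeas hindep t
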